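/- arXiv:math/0312423 — 5 statements merged into one kernel-verified Lean document; each statement's English description precedes it below -/
import Mathlib

section
/- Let K be a field and let E_0, …, E_{a-1} be finite-dimensional K-vector spaces (indexed by Z/aZ), with linear maps u_i : E_i → E_{i+1} for each i in Z/aZ. Let E = E_0 ⊕ ⋯ ⊕ E_{a-1} and let u : E → E be the linear map whose restriction to E_i is u_i (landing in E_{i+1}). Then det(1 − (u_{a-1} ∘ ⋯ ∘ u_1 ∘ u_0)·T^a) = det(1 − u·T) as polynomials in K[T]. -/
/-- The reverse characteristic polynomial `det(1 - f·T)` of an endomorphism `f`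
of a finite-dimensional vector space, computed via any (here: the canonical) basis. -/
noncomputable def revCharPoly {K V : Type*} [Field K] [AddCommGroup V] [Module K V]
    [FiniteDimensional K V] (f : V →ₗ[K] V) : Polynomial K :=
  Matrix.det (1 - (Polynomial.X : Polynomial K) •
    ((LinearMap.toMatrix (Module.finBasis K V) (Module.finBasis K V) f).map Polynomial.C))

/-! Grade the basis of `V` by the summand containing each vector: the matrix `M` of `u` then
raises the degree in `Fin a` by one. Let `P` project onto degree `0` and `N = (1 - P) M`. Read
in `ℕ`, `N` raises the degree, so `1 - tN` is unitriangular with inverse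
`S = ∑_{m < a} (tN)^m`, and Sylvester's identity `det (1 - AB) = det (1 - BA)` turns
`1 - tM = (1 - tN)(1 - S tP · PM)` into `det (1 - tM) = det (1 - PM · S tP)`. Applied to
vectors of degree `0`, `N^m` agrees with `M^m` for `m < a`, and `P M^n P = 0` for `0 < n < a`;
hence `P M S P = t^(a-1) P M^a P`, whose degree-`0` block is the matrix of `u^a` on `E_0`. -/

open Polynomial Finset

theorem Fin.val_add_one_of_ne_zero {a : ℕ} [NeZero a] {x : Fin a} (h : x + 1 ≠ 0) :
    ((x + 1 : Fin a) : ℕ) = x + 1 := by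
  refine val_add_one_of_lt' (lt_of_le_of_ne x.isLt fun hx => h (Fin.ext ?_))
  rw [Fin.val_add, Fin.val_one', Nat.add_mod_mod, hx, Nat.mod_self, Fin.val_zero]

namespace Matrix

variable {ι R α : Type*} {a : ℕ} [NeZero a]

def IsHomogeneous [Zero R] [Add α] (g : ι → α) (d : α) (A : Matrix ι ι R) : Prop :=
  ∀ j k, A j k ≠ 0 → g j = g k + d

def levelProj [DecidableEq ι] [Zero R] [One R] [DecidableEq α] (g : ι → α) (i : α) :
    Matrix ι ι R :=
  diagonal fun j => if g j = i then 1 else 0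

section Semiring

variable [Semiring R] {g : ι → α} {d e : α} {A B : Matrix ι ι R}

theorem isHomogeneous_one [DecidableEq ι] [AddZeroClass α] :
    IsHomogeneous g 0 (1 : Matrix ι ι R) := by
  intro j k h
  rw [add_zero]
  by_contra hne
  exact h (one_apply_ne fun hjk => hne (congrArg g hjk))

theorem IsHomogeneous.mul [Fintype ι] [AddSemigroup α] (hA : IsHomogeneous g d A)
    (hB : IsHomogeneous g e B) : IsHomogeneous g (e + d) (A * B) := by
  intro j k h
  obtain ⟨y, -, hy⟩ := exists_ne_zero_of_sum_ne_zero h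
  rw [hA j y (left_ne_zero_of_mul hy), hB y k (right_ne_zero_of_mul hy), add_assoc]

theorem IsHomogeneous.pow [Fintype ι] [DecidableEq ι] [AddMonoid α] (hA : IsHomogeneous g d A)
    (m : ℕ) : IsHomogeneous g (m • d) (A ^ m) := by
  induction m with
  | zero => simpa using isHomogeneous_one
  | succ m ih => simpa [pow_succ, succ_nsmul'] using ih.mul hA

theorem IsHomogeneous.smul [Add α] (hA : IsHomogeneous g d A) (c : R) :
    IsHomogeneous g d (c • A) :=
  fun j k h => hA j k (right_ne_zero_of_mul h)

theorem IsHomogeneous.map [Add α] {S : Type*} [Semiring S] (hA : IsHomogeneous g d A)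
    (f : R →+* S) : IsHomogeneous g d (A.map f) :=
  fun j k h => hA j k fun h0 => h (by simp [h0])

theorem IsHomogeneous.pow_eq_zero_of_lt [Fintype ι] [DecidableEq ι] {g : ι → ℕ}
    (hA : IsHomogeneous g 1 A) {n : ℕ} (hg : ∀ j, g j < n) : A ^ n = 0 := by
  ext j k
  by_contra h
  have hjk := hA.pow n j k h
  rw [smul_eq_mul, mul_one] at hjk
  have := hg j
  omega

variable [Fintype ι] [DecidableEq ι] [DecidableEq α]

theorem levelProj_mul_mul_levelProj_apply (g : ι → α) (i : α) (A : Matrix ι ι R) (j k : ι) :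
    (levelProj g i * A * levelProj g i : Matrix ι ι R) j k =
      if g j = i ∧ g k = i then A j k else 0 := by
  simp only [levelProj, diagonal_mul, mul_diagonal]
  split_ifs <;> simp_all

theorem levelProj_mul_self (g : ι → α) (i : α) :
    levelProj g i * levelProj g i = (levelProj g i : Matrix ι ι R) := by
  simp only [levelProj, diagonal_mul_diagonal]
  congr 1
  ext j
  split_ifs <;> simp

theorem IsHomogeneous.levelProj_mul_mul_levelProj [AddLeftCancelMonoid α]
    (hA : IsHomogeneous g d A) (hd : d ≠ 0) (i : α) :
    levelProj g i * A * levelProj g i = 0 := by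
  ext j k
  rw [levelProj_mul_mul_levelProj_apply, zero_apply, ite_eq_right_iff]
  rintro ⟨hj, hk⟩
  by_contra h
  have := hA j k h
  rw [hj, hk, left_eq_add] at this
  exact hd this

open Fin.NatCast in
theorem IsHomogeneous.levelProj_mul_pow_mul_levelProj {g : ι → Fin a} {M : Matrix ι ι R}
    (hM : IsHomogeneous g 1 M) {n : ℕ} (hn0 : 0 < n) (hna : n < a) (i : Fin a) :
    levelProj g i * M ^ n * levelProj g i = 0 :=
  (hM.pow n).levelProj_mul_mul_levelProj
    (by rw [nsmul_one, Ne, Fin.natCast_eq_zero]; exact Nat.not_dvd_of_pos_of_lt hn0 hna) i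

end Semiring

section Ring

variable [Ring R] [Fintype ι] [DecidableEq ι] {g : ι → Fin a} {M : Matrix ι ι R}

theorem one_sub_levelProj_mul_apply [DecidableEq α] (g : ι → α) (i : α) (A : Matrix ι ι R)
    (j k : ι) : ((1 - levelProj g i) * A : Matrix ι ι R) j k = if g j = i then 0 else A j k := by
  simp only [sub_mul, one_mul, sub_apply, levelProj, diagonal_mul]
  split_ifs <;> simp

theorem IsHomogeneous.isHomogeneous_val_one_sub_levelProj_mul (hM : IsHomogeneous g 1 M) :
    IsHomogeneous (fun j => (g j : ℕ)) 1 ((1 - levelProj g 0) * M) := by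
  intro j k h
  rw [one_sub_levelProj_mul_apply] at h
  split_ifs at h with hj
  · exact absurd rfl h
  show (g j : ℕ) = g k + 1
  rw [hM j k h] at hj ⊢
  exact Fin.val_add_one_of_ne_zero hj

theorem IsHomogeneous.pow_one_sub_levelProj_mul_mul_levelProj (hM : IsHomogeneous g 1 M)
    {m : ℕ} (hm : m < a) :
    ((1 - levelProj g 0) * M) ^ m * levelProj g 0 = M ^ m * levelProj g 0 := by
  induction m with
  | zero => rfl
  | succ m ih =>
    rw [pow_succ', mul_assoc, ih (by omega), sub_mul, sub_mul, one_mul, ← mul_assoc,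
      ← pow_succ', ← mul_assoc, mul_assoc _ M, ← pow_succ',
      hM.levelProj_mul_pow_mul_levelProj (by omega) hm, sub_zero]

end Ring

section CommRing

variable [CommRing R] [Fintype ι] [DecidableEq ι] {A : Matrix ι ι R}

theorem IsHomogeneous.det_one_sub {g : ι → ℕ} {d : ℕ} (hd : 0 < d)
    (hA : IsHomogeneous g d A) : det (1 - A) = 1 := by
  have hdiag : ∀ j k, g j = g k → A j k = 0 := fun j k hjk => by
    by_contra h
    have := hA j k h
    omega
  have htri : BlockTriangular (1 - A) fun j => OrderDual.toDual (g j) := by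
    intro j k hjk
    change g j < g k at hjk
    have hA0 : A j k = 0 := by
      by_contra h
      have := hA j k h
      omega
    rw [sub_apply, one_apply_ne (by rintro rfl; exact lt_irrefl _ hjk), hA0, sub_zero]
  rw [htri.det]
  refine prod_eq_one fun l _ => ?_
  have : toSquareBlock (1 - A) (fun j => OrderDual.toDual (g j)) l = 1 := by
    ext j k
    simp [toSquareBlock_def, one_apply, Subtype.ext_iff, hdiag j k (j.2.trans k.2.symm)]
  rw [this, det_one]

theorem det_one_sub_levelProj_mul_mul_levelProj [DecidableEq α] (g : ι → α) (i : α)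
    (A : Matrix ι ι R) :
    det (1 - levelProj g i * A * levelProj g i : Matrix ι ι R) =
      det (1 - toSquareBlock A g i) := by
  rw [twoBlockTriangular_det _ (fun j => g j = i)]
  · have h1 : toSquareBlockProp (1 - levelProj g i * A * levelProj g i) (fun j => g j = i) =
        1 - toSquareBlock A g i := by
      ext j k
      simp [toSquareBlockProp_def, toSquareBlock_def, levelProj_mul_mul_levelProj_apply, j.2, k.2,
        one_apply, Subtype.ext_iff]
    have h2 :
        toSquareBlockProp (1 - levelProj g i * A * levelProj g i) (fun j => ¬g j = i) = 1 := by
      ext j k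
      simp [toSquareBlockProp_def, levelProj_mul_mul_levelProj_apply, j.2, one_apply,
        Subtype.ext_iff]
    rw [h1, h2, det_one, mul_one]
  · intro j hj k hk
    rw [sub_apply, levelProj_mul_mul_levelProj_apply, if_neg (fun h => hj h.1),
      one_apply_ne (by rintro rfl; exact hj hk), sub_zero]

variable {g : ι → Fin a} {M : Matrix ι ι R}

theorem IsHomogeneous.levelProj_mul_mul_geom_sum_mul_levelProj (hM : IsHomogeneous g 1 M)
    (t : R) :
    levelProj g 0 * M * (∑ m ∈ range a, (t • ((1 - levelProj g 0) * M)) ^ m) * levelProj g 0 =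
      t ^ (a - 1) • (levelProj g 0 * M ^ a * levelProj g 0) := by
  have ha := NeZero.pos a
  have hterm : ∀ m < a,
      levelProj g 0 * M * (t • ((1 - levelProj g 0) * M)) ^ m * levelProj g 0 =
        t ^ m • (levelProj g 0 * M ^ (m + 1) * levelProj g 0) := fun m hm => by
    rw [_root_.smul_pow, mul_smul_comm, smul_mul_assoc, mul_assoc _ (_ ^ m),
      hM.pow_one_sub_levelProj_mul_mul_levelProj hm, ← mul_assoc, mul_assoc _ M, ← pow_succ']
  rw [mul_sum, sum_mul, sum_eq_single_of_mem (a - 1) (mem_range.2 (by omega))]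
  · rw [hterm _ (by omega), Nat.sub_add_cancel ha]
  · intro m hm hne
    rw [mem_range] at hm
    rw [hterm m hm, hM.levelProj_mul_pow_mul_levelProj (by omega) (by omega), smul_zero]

theorem IsHomogeneous.det_one_sub_smul (hM : IsHomogeneous g 1 M) (t : R) :
    det (1 - t • M) = det (1 - t ^ a • toSquareBlock (M ^ a) g 0) := by
  set P : Matrix ι ι R := levelProj g 0
  set N := (1 - P) * M
  set S := ∑ m ∈ range a, (t • N) ^ m
  have hN := hM.isHomogeneous_val_one_sub_levelProj_mul.smul t
  have hS : (1 - t • N) * S = 1 := by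
    rw [mul_neg_geom_sum, hN.pow_eq_zero_of_lt (fun j => (g j).isLt), sub_zero]
  have hfactor : 1 - t • M = (1 - t • N) * (1 - S * (t • P) * (P * M)) := by
    have hP : P * P = P := levelProj_mul_self g 0
    simp only [mul_sub, mul_one, ← mul_assoc, hS, one_mul, smul_mul_assoc, hP]
    simp only [N, sub_mul, one_mul, smul_sub]
    abel
  calc det (1 - t • M) = det (1 - P * M * (S * (t • P))) := by
        rw [hfactor, det_mul, hN.det_one_sub one_pos, one_mul, det_one_sub_mul_comm]
    _ = det (1 - P * (t ^ a • M ^ a) * P) := by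
        rw [mul_smul_comm, mul_smul_comm, ← mul_assoc,
          hM.levelProj_mul_mul_geom_sum_mul_levelProj, smul_smul, ← pow_succ',
          Nat.sub_add_cancel NeZero.one_le, mul_smul_comm, smul_mul_assoc]
    _ = det (1 - t ^ a • toSquareBlock (M ^ a) g 0) :=
        det_one_sub_levelProj_mul_mul_levelProj g 0 _

theorem IsHomogeneous.charpolyRev_eq_expand (hM : IsHomogeneous g 1 M) :
    M.charpolyRev = expand R a (toSquareBlock (M ^ a) g 0).charpolyRev := by
  rw [charpolyRev, (hM.map C).det_one_sub_smul X, charpolyRev, AlgHom.map_det]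
  congr 1
  refine Matrix.ext fun j k => ?_
  simp [← Matrix.map_pow, toSquareBlock_def, one_apply]

end CommRing

theorem charpolyRev_toSquareBlock_sigma_fst [CommRing R] [DecidableEq ι] [Fintype ι]
    {κ : ι → Type*} [∀ i, Fintype (κ i)] [∀ i, DecidableEq (κ i)]
    (A : Matrix (Σ i, κ i) (Σ i, κ i) R) (i : ι) :
    (A.toSquareBlock Sigma.fst i).charpolyRev =
      (A.submatrix (Sigma.mk i) (Sigma.mk i)).charpolyRev := by
  rw [← reverse_charpoly, ← reverse_charpoly, ← charpoly_reindex (Equiv.sigmaSubtype i)]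
  rfl

end Matrix

namespace DirectSum.IsInternal

open LinearMap

variable {R M ι : Type*} [CommSemiring R] [AddCommMonoid M] [Module R M] [DecidableEq ι]
  [Fintype ι] {p : ι → Submodule R M} (hp : IsInternal p) {κ : ι → Type*}
  [∀ i, Fintype (κ i)] [∀ i, DecidableEq (κ i)] (v : ∀ i, Module.Basis (κ i) R (p i))

theorem isHomogeneous_toMatrix_collectedBasis [Add ι] {f : M →ₗ[R] M} {d : ι}
    (hf : ∀ i, ∀ x ∈ p i, f x ∈ p (i + d)) :
    (toMatrix (hp.collectedBasis v) (hp.collectedBasis v) f).IsHomogeneous Sigma.fst d := by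
  intro j k h
  by_contra hne
  rw [toMatrix_apply, hp.collectedBasis_repr_of_mem_ne v (Ne.symm hne)
    (hf _ _ (hp.collectedBasis_mem v k))] at h
  exact h rfl

theorem toMatrix_restrict {f : M →ₗ[R] M} {i : ι} (hf : ∀ x ∈ p i, f x ∈ p i) :
    toMatrix (v i) (v i) (f.restrict hf) =
      (toMatrix (hp.collectedBasis v) (hp.collectedBasis v) f).submatrix (Sigma.mk i)
        (Sigma.mk i) := by
  ext j k
  simp [toMatrix_apply, hp.collectedBasis_repr_of_mem v (hf _ (v i k).2), restrict_apply]

end DirectSum.IsInternal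

theorem revCharPoly_eq_charpolyRev_toMatrix {K V ι : Type*} [Field K] [AddCommGroup V]
    [Module K V] [FiniteDimensional K V] [Fintype ι] [DecidableEq ι] (b : Module.Basis ι K V)
    (f : V →ₗ[K] V) : revCharPoly f = (LinearMap.toMatrix b b f).charpolyRev := by
  rw [← Matrix.reverse_charpoly, LinearMap.charpoly_toMatrix,
    ← LinearMap.charpoly_toMatrix f (Module.finBasis K V), Matrix.reverse_charpoly]
  rfl

open LinearMap in
/-- Let `E = ⊕_{i ∈ Z/aZ} E_i` (an internal direct sum of finite-dimensional subspaces of `V`),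
and let `u` be an endomorphism mapping `E_i` into `E_{i+1}` (cyclically).  The restriction of
`u^a` to `E_0` is the cyclic composition `u_{a-1} ∘ ⋯ ∘ u_1 ∘ u_0`.  Then
`det(1 − (u_{a-1}⋯u_0)·T^a) = det(1 − u·T)`. -/
theorem stmt0 {K V : Type*} [Field K] [AddCommGroup V] [Module K V] [FiniteDimensional K V]
    (a : ℕ) [NeZero a] (p : Fin a → Submodule K V) (hp : DirectSum.IsInternal p)
    (u : V →ₗ[K] V) (hu : ∀ (i : Fin a), ∀ x ∈ p i, u x ∈ p (i + 1))
    (h0 : ∀ x ∈ p 0, (u ^ a) x ∈ p 0) :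
    (revCharPoly ((u ^ a).restrict h0)).comp (Polynomial.X ^ a) = revCharPoly u := by
  classical
  let v i := Module.finBasis K (p i)
  rw [revCharPoly_eq_charpolyRev_toMatrix (hp.collectedBasis v),
    (hp.isHomogeneous_toMatrix_collectedBasis v hu).charpolyRev_eq_expand, toMatrix_pow,
    Matrix.charpolyRev_toSquareBlock_sigma_fst, ← hp.toMatrix_restrict v h0,
    ← revCharPoly_eq_charpolyRev_toMatrix, expand_eq_comp_X_pow]
end

section
/- Let K be a field, a ≥ 1, and let M_0, …, M_{a-1} be n×n matrices over K. Form the block matrix V of size an × an with (block) entries V_{i+1,i} = M_i for 0 ≤ i ≤ a−2, V_{0,a−1} = M_{a−1}, and all other blocks zero. Then det(1 − (M_{a-1}⋯M_1 M_0)·T^a) = det(1 − V·T) in K[T]. -/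
/-!
Write `1 - V = (1 - S) - E`, where `S` is the block-subdiagonal part of `V` and `E` the corner
block `M_{a-1}` in position `(0, a-1)`. The block column `X` with blocks
`X_r = M_{r-1} ⋯ M_0` solves `(1 - S) X = e₀`, so `1 - V = (1 - S)(1 - X B)` where `B` is the
block row with `M_{a-1}` in the last slot. As `1 - S` is block unitriangular and
`det (1 - X B) = det (1 - B X)`, we get `det (1 - V) = det (1 - M_{a-1} ⋯ M_0)`.
Applied to the blocks `T • M_i` over `K[T]`, this is the claimed identity.
-/

open Polynomial

theorem Fin.sum_ite_val_eq_val_add_one {M : Type*} [AddCommMonoid M] {a : ℕ} (r : Fin a)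
    (f : Fin a → M) :
    (∑ c : Fin a, if (r : ℕ) = c + 1 then f c else 0) =
      if (r : ℕ) = 0 then 0 else f ⟨r - 1, by omega⟩ := by
  split_ifs with hr
  · exact Finset.sum_eq_zero fun c _ => if_neg (by omega)
  · rw [Fintype.sum_eq_single ⟨r - 1, by omega⟩ fun c hc => if_neg ?_, if_pos (by simp; omega)]
    exact fun h => hc (Fin.ext (by simp; omega))

namespace Matrix

variable {R : Type*} [CommRing R] {n : ℕ}

def blockCyclic {a : ℕ} [NeZero a] (N : Fin a → Matrix (Fin n) (Fin n) R) :
    Matrix (Fin a × Fin n) (Fin a × Fin n) R :=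
  of fun p q => if p.1 = q.1 + 1 then N q.1 p.2 q.2 else 0

def blockSubdiagonal {a : ℕ} (N : Fin a → Matrix (Fin n) (Fin n) R) :
    Matrix (Fin a × Fin n) (Fin a × Fin n) R :=
  of fun p q => if (p.1 : ℕ) = q.1 + 1 then N q.1 p.2 q.2 else 0

variable (R) in
def firstBlockInclusion (a n : ℕ) : Matrix (Fin a × Fin n) (Fin n) R :=
  of fun p y => if (p.1 : ℕ) = 0 then (1 : Matrix (Fin n) (Fin n) R) p.2 y else 0

def lastBlockRow {b : ℕ} (N : Fin (b + 1) → Matrix (Fin n) (Fin n) R) :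
    Matrix (Fin n) (Fin (b + 1) × Fin n) R :=
  of fun x q => if q.1 = Fin.last b then N q.1 x q.2 else 0

def partialProd {a : ℕ} (N : Fin a → Matrix (Fin n) (Fin n) R) (k : ℕ) :
    Matrix (Fin n) (Fin n) R :=
  ((List.ofFn N).take k).reverse.prod

def partialProdStack {a : ℕ} (N : Fin a → Matrix (Fin n) (Fin n) R) :
    Matrix (Fin a × Fin n) (Fin n) R :=
  of fun p y => partialProd N p.1 p.2 y

theorem partialProd_zero {a : ℕ} (N : Fin a → Matrix (Fin n) (Fin n) R) :
    partialProd N 0 = 1 := by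
  simp [partialProd]

theorem partialProd_succ {a : ℕ} (N : Fin a → Matrix (Fin n) (Fin n) R) (k : Fin a) :
    partialProd N (k + 1) = N k * partialProd N k := by
  simp [partialProd, List.take_add_one]

theorem partialProd_length {a : ℕ} (N : Fin a → Matrix (Fin n) (Fin n) R) :
    partialProd N a = (List.ofFn N).reverse.prod := by
  rw [partialProd, List.take_of_length_le (by simp)]

theorem det_one_sub_blockSubdiagonal {a : ℕ} (N : Fin a → Matrix (Fin n) (Fin n) R) :
    (1 - blockSubdiagonal N).det = 1 := by
  have hT : (1 - blockSubdiagonal N).BlockTriangular (fun p => OrderDual.toDual p.1) := by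
    rintro ⟨r, x⟩ ⟨c, y⟩ (hlt : r < c)
    have hne : (r, x) ≠ (c, y) := by simp [hlt.ne]
    rw [Fin.lt_def] at hlt
    simp [blockSubdiagonal, one_apply_ne hne]
    omega
  rw [hT.det_fintype]
  refine Finset.prod_eq_one fun k _ => ?_
  suffices (1 - blockSubdiagonal N).toSquareBlock (fun p => OrderDual.toDual p.1) k = 1 by
    rw [this, det_one]
  ext ⟨⟨r, x⟩, hr⟩ ⟨⟨c, y⟩, hc⟩
  obtain rfl : r = k := hr
  obtain rfl : c = r := hc
  simp [toSquareBlock, toSquareBlockProp_def, blockSubdiagonal, one_apply, Subtype.ext_iff]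

theorem blockSubdiagonal_mul_partialProdStack {a : ℕ} (N : Fin a → Matrix (Fin n) (Fin n) R) :
    blockSubdiagonal N * partialProdStack N = partialProdStack N - firstBlockInclusion R a n := by
  ext ⟨r, x⟩ y
  have hblock : ∀ c : Fin a,
      (∑ z, blockSubdiagonal N (r, x) (c, z) * partialProdStack N (c, z) y) =
        if (r : ℕ) = c + 1 then partialProd N r x y else 0 := by
    intro c
    split_ifs with h
    · simp [blockSubdiagonal, partialProdStack, h, ← mul_apply, ← partialProd_succ]
    · simp [blockSubdiagonal, h]
  rw [mul_apply, Fintype.sum_prod_type, Finset.sum_congr rfl fun c _ => hblock c,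
    Fin.sum_ite_val_eq_val_add_one]
  split_ifs with hr
  · simp [partialProdStack, firstBlockInclusion, hr, partialProd_zero]
  · simp [partialProdStack, firstBlockInclusion, hr]

theorem lastBlockRow_mul_partialProdStack {b : ℕ} (N : Fin (b + 1) → Matrix (Fin n) (Fin n) R) :
    lastBlockRow N * partialProdStack N = (List.ofFn N).reverse.prod := by
  ext x y
  rw [mul_apply, Fintype.sum_prod_type, Fintype.sum_eq_single (Fin.last b) fun c hc => ?_]
  · have h := partialProd_succ N (Fin.last b)
    rw [Fin.val_last, partialProd_length] at h
    simp only [lastBlockRow, partialProdStack, of_apply, ↓reduceIte]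
    rw [← mul_apply, h, Fin.val_last]
  · simp [lastBlockRow, hc]

theorem blockCyclic_eq_blockSubdiagonal_add {b : ℕ}
    (N : Fin (b + 1) → Matrix (Fin n) (Fin n) R) :
    blockCyclic N =
      blockSubdiagonal N + firstBlockInclusion R (b + 1) n * lastBlockRow N := by
  ext ⟨r, x⟩ ⟨c, y⟩
  have hcyc : r = c + 1 ↔ (r : ℕ) = c + 1 ∨ (r : ℕ) = 0 ∧ c = Fin.last b := by
    rcases eq_or_ne c (Fin.last b) with rfl | hc
    · rw [Fin.last_add_one, Fin.ext_iff]
      simp [r.isLt.ne]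
    · rw [Fin.ext_iff, Fin.val_add_one_of_lt (Fin.lt_last_iff_ne_last.mpr hc)]
      simp [hc]
  rw [add_apply, mul_apply, Finset.sum_eq_single x (fun j _ hj => by
    simp [firstBlockInclusion, one_apply_ne' hj]) (by simp)]
  simp only [blockCyclic, blockSubdiagonal, firstBlockInclusion, lastBlockRow, of_apply, hcyc,
    one_apply_eq]
  split_ifs <;> simp_all

theorem det_one_sub_blockCyclic {a : ℕ} [NeZero a] (N : Fin a → Matrix (Fin n) (Fin n) R) :
    (1 - blockCyclic N).det = (1 - (List.ofFn N).reverse.prod).det := by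
  obtain ⟨b, rfl⟩ := Nat.exists_eq_add_one_of_ne_zero (NeZero.ne a)
  have hfactor : 1 - blockCyclic N =
      (1 - blockSubdiagonal N) * (1 - partialProdStack N * lastBlockRow N) := by
    rw [mul_sub, mul_one, ← Matrix.mul_assoc, Matrix.sub_mul, Matrix.one_mul,
      blockSubdiagonal_mul_partialProdStack, sub_sub_cancel, blockCyclic_eq_blockSubdiagonal_add,
      sub_sub]
  rw [hfactor, det_mul, det_one_sub_blockSubdiagonal, one_mul, det_one_sub_mul_comm,
    lastBlockRow_mul_partialProdStack]

theorem prod_reverse_ofFn_smul_map {S : Type*} [CommRing S] {a : ℕ} (f : R →+* S) (s : S)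
    (M : Fin a → Matrix (Fin n) (Fin n) R) :
    (List.ofFn fun c => s • (M c).map f).reverse.prod =
      s ^ a • ((List.ofFn M).reverse.prod).map f := by
  have h := List.smul_prod ((List.ofFn M).reverse.map (f.mapMatrix (m := Fin n))) s
  rw [← map_list_prod (f.mapMatrix (m := Fin n)), List.map_map, List.length_map,
    List.length_reverse, List.length_ofFn, RingHom.mapMatrix_apply] at h
  rw [h, List.map_reverse, List.map_ofFn]
  rfl

end Matrix

/-- Block-cyclic determinant identity: if `V` is the `an × an` block matrix with block
`M_i` in block position `(i+1 mod a, i)` and zeros elsewhere, then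
`det(1 − (M_{a-1}⋯M_1M_0)·T^a) = det(1 − V·T)` in `K[T]`. -/
theorem stmt1 {K : Type*} [Field K] (a n : ℕ) [NeZero a]
    (M : Fin a → Matrix (Fin n) (Fin n) K)
    (V : Matrix (Fin a × Fin n) (Fin a × Fin n) K)
    (hV : ∀ (r c : Fin a) (x y : Fin n),
      V (r, x) (c, y) = if r = c + 1 then M c x y else 0) :
    Matrix.det (1 - (Polynomial.X : Polynomial K) ^ a •
        (((List.ofFn M).reverse.prod).map Polynomial.C)) =
    Matrix.det (1 - (Polynomial.X : Polynomial K) • V.map Polynomial.C) := by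
  have hV_cyclic : (X : K[X]) • V.map C = Matrix.blockCyclic fun c => (X : K[X]) • (M c).map C := by
    ext ⟨r, x⟩ ⟨c, y⟩
    simp [Matrix.blockCyclic, hV, apply_ite]
  rw [hV_cyclic, Matrix.det_one_sub_blockCyclic, Matrix.prod_reverse_ofFn_smul_map]
end

section
/- Let M = (m_{ij})_{i,j≥1} be a nuclear matrix over C_p, q = p^a, g an automorphism fixing the valuation, and k ≥ 1. Let C_k be the coefficient of T^k in det(1 − (M^{g^{a-1}}⋯M^g M)T). Let 𝒜 be the set of k×k submatrices of M contained in the first k rows, ℬ the set of all other k×k submatrices, t_𝒜 = inf_{W∈𝒜} ord_p det W, t_ℬ = inf_{W∈ℬ} ord_p det W, and M^{[k]} the upper-left k×k submatrix. If 2·ord_p det M^{[k]} < t_𝒜 + t_ℬ, then ord_q C_k = ord_p det M^{[k]}, where ord_q = ord_p / a. -/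
/-!
`C_k` is `(-1)^k` times the trace of the `k`-th compound matrix (the matrix of `k × k` minors) of
the product `M^{g^{a-1}} ⋯ M`, and by functoriality of `⋀^k` (Cauchy–Binet) that compound is the
product of the compounds of the factors `M^{g^s}`. Give the index `e = {0, …, k-1}` weight `0` and
every other index weight `ord det M^{[k]} - t_𝒜`: after this diagonal rescaling, the hypothesis
says that all minors of `M` have valuation at least `ord det M^{[k]}`, the minors outside the rows
`e` strictly more, and the corner minor exactly that. This shape is preserved by products, the
levels adding up, and it forces the trace to have the valuation of the corner entry.
-/

open Polynomial Set.powersetCard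

theorem Fin.exists_le_of_ne_castLEOrderEmb {k n : ℕ} (h : k ≤ n) {s : Fin k ↪o Fin n}
    (hs : s ≠ Fin.castLEOrderEmb h) : ∃ i, k ≤ (s i : ℕ) := by
  contrapose! hs
  have hmono : StrictMono fun j => (⟨s j, hs j⟩ : Fin k) := fun a b hab => s.strictMono hab
  ext i
  simpa using congrArg Fin.val (hmono.apply_eq (x := i))

namespace Matrix

section Compound

variable {R : Type*} [CommRing R] {n : ℕ}

/-- The `k`-th compound matrix, with rows and columns indexed by increasing maps `Fin k → Fin n`. -/
noncomputable def compound (k : ℕ) (A : Matrix (Fin n) (Fin n) R) :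
    Matrix (Fin k ↪o Fin n) (Fin k ↪o Fin n) R :=
  of fun r c => (A.submatrix r c).det

theorem compound_eq_toMatrix_exteriorPower_map (k : ℕ) (A : Matrix (Fin n) (Fin n) R) :
    compound k A = (LinearMap.toMatrix ((Pi.basisFun R (Fin n)).exteriorPower k)
      ((Pi.basisFun R (Fin n)).exteriorPower k) (exteriorPower.map k (toLin' A))).submatrix
      ofFinEmbEquiv ofFinEmbEquiv := by
  ext r c
  rw [submatrix_apply, LinearMap.toMatrix_apply, exteriorPower.basis_repr_apply,
    exteriorPower.basis_apply, exteriorPower.ιMulti_family, exteriorPower.map_apply_ιMulti,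
    exteriorPower.ιMultiDual_apply_ιMulti, ← det_transpose]
  simp only [compound, of_apply, Equiv.symm_apply_apply, Function.comp_apply, Pi.basisFun_apply,
    toLin'_apply, mulVec_single, MulOpposite.op_one, one_smul, Module.Basis.coord_apply,
    Pi.basisFun_repr, col_apply]
  rfl

theorem compound_one (k : ℕ) : compound k (1 : Matrix (Fin n) (Fin n) R) = 1 := by
  rw [compound_eq_toMatrix_exteriorPower_map, toLin'_one, exteriorPower.map_id,
    LinearMap.toMatrix_id, submatrix_one_equiv]

theorem compound_mul (k : ℕ) (A B : Matrix (Fin n) (Fin n) R) :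
    compound k (A * B) = compound k A * compound k B := by
  simp only [compound_eq_toMatrix_exteriorPower_map, toLin'_mul, exteriorPower.map_comp,
    LinearMap.toMatrix_comp _ ((Pi.basisFun R (Fin n)).exteriorPower k), submatrix_mul_equiv]

theorem compound_list_prod (k : ℕ) (L : List (Matrix (Fin n) (Fin n) R)) :
    compound k L.prod = (L.map (compound k)).prod :=
  map_list_prod (⟨⟨compound k, compound_one k⟩, compound_mul k⟩ :
    Matrix (Fin n) (Fin n) R →* Matrix (Fin k ↪o Fin n) (Fin k ↪o Fin n) R) L

theorem compound_map {S F : Type*} [CommRing S] [FunLike F R S] [RingHomClass F R S] (k : ℕ)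
    (f : F) (A : Matrix (Fin n) (Fin n) R) : compound k (A.map f) = (compound k A).map f := by
  ext r c
  exact ((f : R →+* S).map_det _).symm

theorem trace_compound (k : ℕ) (A : Matrix (Fin n) (Fin n) R) :
    (compound k A).trace =
      ∑ s ∈ Finset.univ.powersetCard k,
        (A.submatrix (Subtype.val : s → Fin n) Subtype.val).det := by
  rw [Finset.sum_subtype _ (p := (· ∈ Set.powersetCard (Fin n) k)) (fun s => by simp [mem_iff])]
  refine (Fintype.sum_equiv ofFinEmbEquiv.symm _ _ fun s => ?_).symm
  rw [← det_submatrix_equiv_self (orderIsoOfFin s).toEquiv, submatrix_submatrix]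
  rfl

theorem coeff_charpolyRev (k : ℕ) (A : Matrix (Fin n) (Fin n) R) :
    A.charpolyRev.coeff k = (-1) ^ k * (compound k A).trace := by
  have h : A.charpolyRev = det (1 + (X : R[X]) • (-A).map C) := by
    rw [charpolyRev, sub_eq_add_neg, ← smul_neg, Matrix.map_neg C (map_neg C) A]
  rw [h, coeff_det_one_add_X_smul_eq_sum_minors, trace_compound, Finset.mul_sum]
  refine Finset.sum_congr rfl fun s hs => ?_
  rw [submatrix_neg, Pi.neg_apply, Pi.neg_apply, det_neg, Fintype.card_coe,
    (Finset.mem_powersetCard.mp hs).2]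

end Compound

section Dominant

variable {R ι Γ : Type*} [CommRing R] [AddCommGroup Γ] [LinearOrder Γ] [IsOrderedAddMonoid Γ]

/-- After conjugating `A` by a diagonal matrix whose entries have valuations `w`, every entry has
valuation at least `c`, the entries outside row `e` strictly more, and the corner `A e e`
exactly `c`. -/
structure IsDominantAt (v : AddValuation R (WithTop Γ)) (w : ι → Γ) (e : ι) (c : Γ)
    (A : Matrix ι ι R) : Prop where
  le_val : ∀ i j, ((c + w i - w j : Γ) : WithTop Γ) ≤ v (A i j)
  lt_val : ∀ i, i ≠ e → ∀ j, ((c + w i - w j : Γ) : WithTop Γ) < v (A i j)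
  val_corner : v (A e e) = c

variable {v : AddValuation R (WithTop Γ)} {w : ι → Γ} {e : ι} {c d : Γ} {A B : Matrix ι ι R}

lemma IsDominantAt.map (hA : IsDominantAt v w e c A) (f : R → R) (hf : ∀ x, v (f x) = v x) :
    IsDominantAt v w e c (A.map f) :=
  ⟨fun i j => (hf _).symm ▸ hA.le_val i j, fun i hi j => (hf _).symm ▸ hA.lt_val i hi j,
    (hf _).trans hA.val_corner⟩

variable [Fintype ι] [DecidableEq ι]

lemma IsDominantAt.mul (hA : IsDominantAt v w e c A) (hB : IsDominantAt v w e d B) :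
    IsDominantAt v w e (c + d) (A * B) := by
  have hsplit : ∀ i l j, ((c + d + w i - w j : Γ) : WithTop Γ) =
      ((c + w i - w l : Γ) : WithTop Γ) + ((d + w l - w j : Γ) : WithTop Γ) := by
    intro i l j
    rw [← WithTop.coe_add]
    congr 1
    abel
  have hle : ∀ i l j, ((c + d + w i - w j : Γ) : WithTop Γ) ≤ v (A i l * B l j) := fun i l j => by
    rw [v.map_mul, hsplit i l j]
    exact add_le_add (hA.le_val i l) (hB.le_val l j)
  have hlt : ∀ i l j, (i ≠ e ∨ l ≠ e) →
      ((c + d + w i - w j : Γ) : WithTop Γ) < v (A i l * B l j) := by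
    rintro i l j (hi | hl) <;> rw [v.map_mul, hsplit i l j]
    · exact WithTop.add_lt_add_of_lt_of_le WithTop.coe_ne_top (hA.lt_val i hi l) (hB.le_val l j)
    · exact WithTop.add_lt_add_of_le_of_lt WithTop.coe_ne_top (hA.le_val i l) (hB.lt_val l hl j)
  refine ⟨fun i j => v.map_le_sum fun l _ => hle i l j,
    fun i hi j => v.map_lt_sum WithTop.coe_ne_top fun l _ => hlt i l j (Or.inl hi), ?_⟩
  have hrest : ((c + d : Γ) : WithTop Γ) < v (∑ l ∈ Finset.univ.erase e, A e l * B l e) := by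
    refine v.map_lt_sum WithTop.coe_ne_top fun l hl => ?_
    simpa using hlt e l e (Or.inr (Finset.ne_of_mem_erase hl))
  have hcorner : v (A e e * B e e) = ((c + d : Γ) : WithTop Γ) := by
    rw [v.map_mul, hA.val_corner, hB.val_corner, WithTop.coe_add]
  rw [mul_apply, ← Finset.add_sum_erase _ _ (Finset.mem_univ e),
    v.map_add_eq_of_lt_left (hcorner ▸ hrest), hcorner]

lemma IsDominantAt.val_trace (hA : IsDominantAt v w e c A) : v A.trace = c := by
  have hrest : (c : WithTop Γ) < v (∑ i ∈ Finset.univ.erase e, A i i) :=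
    v.map_lt_sum WithTop.coe_ne_top fun i hi => by
      simpa using hA.lt_val i (Finset.ne_of_mem_erase hi) i
  rw [trace, ← Finset.add_sum_erase _ _ (Finset.mem_univ e), diag_apply,
    v.map_add_eq_of_lt_left (hA.val_corner ▸ hrest), hA.val_corner]

lemma IsDominantAt.list_prod {L : List (Matrix ι ι R)} (hL : L ≠ [])
    (h : ∀ A ∈ L, IsDominantAt v w e c A) : IsDominantAt v w e (L.length • c) L.prod := by
  induction L with
  | nil => exact absurd rfl hL
  | cons A L ih =>
    rcases eq_or_ne L [] with rfl | hne
    · simpa using h A List.mem_cons_self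
    rw [List.prod_cons, List.length_cons, succ_nsmul']
    exact (h A List.mem_cons_self).mul (ih hne fun B hB => h B (List.mem_cons_of_mem A hB))

end Dominant

theorem val_coeff_charpolyRev_prod_map_pow {K Γ : Type*} [CommRing K] [AddCommGroup Γ]
    [LinearOrder Γ] [IsOrderedAddMonoid Γ] {v : AddValuation K (WithTop Γ)} (g : RingAut K)
    (hg : ∀ x, v (g x) = v x) {a k n : ℕ} (ha : 0 < a) {M : Matrix (Fin n) (Fin n) K}
    {w : (Fin k ↪o Fin n) → Γ} {e : Fin k ↪o Fin n} {c : Γ}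
    (hM : IsDominantAt v w e c (compound k M)) :
    v ((((List.range a).map fun s => M.map ⇑(g ^ s)).reverse.prod).charpolyRev.coeff k) =
      ((a • c : Γ) : WithTop Γ) := by
  have hgs : ∀ s x, v ((g ^ s) x) = v x := by
    intro s
    induction s with
    | zero => exact fun x => rfl
    | succ s ih => exact fun x => (ih (g x)).trans (hg x)
  have hprod := IsDominantAt.list_prod
    (L := ((List.range a).map fun s => compound k (M.map ⇑(g ^ s))).reverse)
    (by simpa using ha.ne') (by
      simp only [List.mem_reverse, List.mem_map, List.mem_range]
      rintro _ ⟨s, -, rfl⟩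
      rw [compound_map]
      exact hM.map (⇑(g ^ s)) (hgs s))
  rw [coeff_charpolyRev, compound_list_prod, List.map_reverse, List.map_map, Function.comp_def,
    v.map_mul, v.map_pow, v.map_neg, v.map_one, smul_zero, zero_add, hprod.val_trace,
    List.length_reverse, List.length_map, List.length_range]

theorem isDominantAt_compound {K : Type*} [CommRing K] (v : AddValuation K (WithTop ℝ))
    {k n : ℕ} (hkn : k ≤ n) (M : Matrix (Fin n) (Fin n) K) {r α : ℝ}
    (hcorner : v (M.submatrix (Fin.castLE hkn) (Fin.castLE hkn)).det = r)
    (hA : ∀ s t : Fin k ↪o Fin n, (∀ i, (s i : ℕ) < k) → (α : WithTop ℝ) ≤ v (M.submatrix s t).det)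
    (hB : ∀ s t : Fin k ↪o Fin n, (∃ i, k ≤ (s i : ℕ)) →
      ((2 * r - α : ℝ) : WithTop ℝ) < v (M.submatrix s t).det) :
    IsDominantAt v (fun s => if s = Fin.castLEOrderEmb hkn then 0 else r - α)
      (Fin.castLEOrderEmb hkn) r (compound k M) := by
  set e := Fin.castLEOrderEmb hkn
  set w : (Fin k ↪o Fin n) → ℝ := fun s => if s = e then 0 else r - α
  have he : ∀ i, (e i : ℕ) < k := fun i => i.isLt
  have hαr : α ≤ r := by exact_mod_cast hcorner ▸ hA e e he
  have hlt : ∀ s, s ≠ e → ∀ t, ((r + w s - w t : ℝ) : WithTop ℝ) < v (compound k M s t) := by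
    intro s hs t
    refine lt_of_le_of_lt (WithTop.coe_le_coe.mpr ?_)
      (hB s t (Fin.exists_le_of_ne_castLEOrderEmb hkn hs))
    simp only [w, if_neg hs]
    split_ifs <;> linarith
  refine ⟨fun s t => ?_, hlt, hcorner⟩
  by_cases hs : s = e
  · subst hs
    by_cases ht : t = e
    · simp only [w, ht, if_true, add_zero, sub_zero]
      exact hcorner.ge
    · simp only [w, if_true, if_neg ht, add_zero]
      rw [sub_sub_cancel]
      exact hA e t he
  · exact (hlt s hs t).le

theorem exists_isDominantAt_compound {K : Type*} [CommRing K] (v : AddValuation K (WithTop ℝ))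
    {k n : ℕ} (hkn : k ≤ n) (M : Matrix (Fin n) (Fin n) K) {r : ℝ} {tA tB : WithTop ℝ}
    (hcorner : v (M.submatrix (Fin.castLE hkn) (Fin.castLE hkn)).det = r)
    (hA : ∀ s t : Fin k ↪o Fin n, (∀ i, (s i : ℕ) < k) → tA ≤ v (M.submatrix s t).det)
    (hB : ∀ s t : Fin k ↪o Fin n, (∃ i, k ≤ (s i : ℕ)) → tB ≤ v (M.submatrix s t).det)
    (hAB : 2 • (r : WithTop ℝ) < tA + tB) :
    ∃ w, IsDominantAt v w (Fin.castLEOrderEmb hkn) r (compound k M) := by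
  have hAr : tA ≤ r :=
    hcorner ▸ hA (Fin.castLEOrderEmb hkn) (Fin.castLEOrderEmb hkn) fun i => i.isLt
  obtain ⟨α, rfl⟩ := WithTop.ne_top_iff_exists.mp (ne_top_of_le_ne_top WithTop.coe_ne_top hAr)
  have hBα : ((2 * r - α : ℝ) : WithTop ℝ) < tB := by
    induction tB using WithTop.recTopCoe with
    | top => exact WithTop.coe_lt_top _
    | coe b =>
      norm_cast at hAB ⊢
      rw [two_nsmul] at hAB
      linarith
  exact ⟨_, isDominantAt_compound v hkn M hcorner hA fun s t hs => hBα.trans_le (hB s t hs)⟩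

end Matrix

open Matrix

/-- Transformation theorem (finite version, size `n ≥ 2k`).  Here `v` is an additive
valuation on `K` (`ℂ_p` stand-in), `g` a valuation-preserving ring automorphism,
`C_k` the `T^k`-coefficient of `det(1 − (M^{g^{a-1}}⋯M^g M)T)`, `t_𝒜` (resp. `t_ℬ`)
the infimum of `v(det W)` over `k×k` submatrices `W` of `M` contained in the first
`k` rows (resp. all other `k×k` submatrices), and `M^{[k]}` the upper-left `k×k`
submatrix.  If `2·ord det M^{[k]} < t_𝒜 + t_ℬ`, then `ord_q C_k = ord_p det M^{[k]}`,
i.e. `v(C_k) = a · v(det M^{[k]})`. -/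
theorem stmt8 {K : Type*} [Field K] (v : K → WithTop ℝ) (hv0 : v 0 = ⊤)
    (hvmul : ∀ x y : K, v (x * y) = v x + v y)
    (hvadd : ∀ x y : K, min (v x) (v y) ≤ v (x + y))
    (g : RingAut K) (hg : ∀ x : K, v (g x) = v x)
    (a k n : ℕ) (ha : 0 < a) (hkn : 2 * k ≤ n)
    (M : Matrix (Fin n) (Fin n) K)
    (tA tB : WithTop ℝ)
    (htA : tA = ⨅ rc : {x : (Fin k → Fin n) × (Fin k → Fin n) //
        StrictMono x.1 ∧ StrictMono x.2 ∧ ∀ i, (x.1 i : ℕ) < k},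
      v (Matrix.det (M.submatrix rc.1.1 rc.1.2)))
    (htB : tB = ⨅ rc : {x : (Fin k → Fin n) × (Fin k → Fin n) //
        StrictMono x.1 ∧ StrictMono x.2 ∧ ∃ i, k ≤ (x.1 i : ℕ)},
      v (Matrix.det (M.submatrix rc.1.1 rc.1.2)))
    (Mk : Matrix (Fin k) (Fin k) K)
    (hMk : Mk = M.submatrix (Fin.castLE (by omega)) (Fin.castLE (by omega)))
    (Ck : K)
    (hCk : Ck = (Matrix.det (1 - (Polynomial.X : Polynomial K) •
        ((((List.range a).map fun s => M.map ⇑(g ^ s)).reverse.prod).map Polynomial.C))).coeff k)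
    (hyp : 2 • v (Matrix.det Mk) < tA + tB) :
    v Ck = a • v (Matrix.det Mk) := by
  obtain ⟨r, hr⟩ : ∃ r : ℝ, (r : WithTop ℝ) = v Mk.det := WithTop.ne_top_iff_exists.mp
    fun htop => not_top_lt (by rwa [htop, two_nsmul, WithTop.top_add] at hyp)
  have hv1 : v 1 = 0 := by
    have h := hvmul Mk.det 1
    rw [mul_one, ← hr] at h
    exact WithTop.add_left_cancel WithTop.coe_ne_top (by rw [add_zero]; exact h.symm)
  let val := AddValuation.of v hv0 hv1 hvadd hvmul
  have hA : ∀ s t : Fin k ↪o Fin n, (∀ i, (s i : ℕ) < k) → tA ≤ val (M.submatrix s t).det :=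
    fun s t hs => htA ▸ ciInf_le (Set.finite_range _).bddBelow
      (Subtype.mk ((s, t) : (Fin k → Fin n) × (Fin k → Fin n)) ⟨s.strictMono, t.strictMono, hs⟩)
  have hB : ∀ s t : Fin k ↪o Fin n, (∃ i, k ≤ (s i : ℕ)) → tB ≤ val (M.submatrix s t).det :=
    fun s t hs => htB ▸ ciInf_le (Set.finite_range _).bddBelow
      (Subtype.mk ((s, t) : (Fin k → Fin n) × (Fin k → Fin n)) ⟨s.strictMono, t.strictMono, hs⟩)
  obtain ⟨w, hw⟩ := exists_isDominantAt_compound val (by omega) M (hMk ▸ hr.symm) hA hB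
    (hr ▸ hyp)
  rw [hCk, ← hr, ← WithTop.coe_nsmul]
  exact val_coeff_charpolyRev_prod_map_pow (v := val) g hg ha hw
end

section
/- Let d ≥ 1, p a prime with p > d, and let r be the least nonnegative residue of p mod d. Define the n×n matrix r_n = (r_{ij})_{1≤i,j≤n} with r_{ij} = d·⌈(ri − j)/d⌉ − (ri − j), so that r_{ij} is the least nonnegative residue of −(ri − j) ≡ j − ri mod d, equivalently the least nonnegative residue of j − ip mod d. Then for any permutation σ_0 of {1,…,n} satisfying σ_0(i) = k whenever r_{ik} = 0, one has r_{ij} − r_{i,σ_0(i)} ≥ j − σ_0(i) for all 1 ≤ i, j ≤ n. -/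
/-!
Row `i` of the matrix is `k ↦ (k - c) mod d` with `c = r(i+1) - 1`, so
`r_{ij} - r_{iσ(i)} ≡ j - σ(i) (mod d)`. If the inequality failed, the difference would be at most
`j - σ(i) - d`, so the residue wraps through `0` at some `k` with `σ(i) < k ≤ j`; the hypothesis
on `σ` then forces `σ(i) = k`, which is absurd.
-/

theorem Int.natCast_mul_ceil_div_sub (d : ℕ) (x : ℤ) :
    (d : ℤ) * ⌈(x : ℚ) / d⌉ - x = (-x) % d := by
  have hceil : ⌈(x : ℚ) / d⌉ = -⌊((-x : ℤ) : ℚ) / d⌋ := by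
    rw [show (x : ℚ) / d = -(((-x : ℤ) : ℚ) / d) by push_cast; ring, Int.ceil_neg]
  rw [hceil, Rat.floor_intCast_div_natCast, Int.emod_def]
  ring

theorem Int.exists_emod_eq_zero_of_emod_sub_emod_lt {d : ℤ} (hd : 0 < d) {a b c : ℤ}
    (h : (b - c) % d - (a - c) % d < b - a) :
    ∃ k, a < k ∧ k ≤ b ∧ (k - c) % d = 0 := by
  have ha := Int.emod_add_ediv_mul (a - c) d
  have hb := Int.emod_add_ediv_mul (b - c) d
  have hq : (a - c) / d + 1 ≤ (b - c) / d := by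
    by_contra! hlt
    have : d * ((b - c) / d) ≤ d * ((a - c) / d) := mul_le_mul_of_nonneg_left (by omega) hd.le
    linarith
  refine ⟨c + d * ((a - c) / d + 1), ?_, ?_, ?_⟩
  · linarith [Int.emod_lt_of_pos (a - c) hd]
  · linarith [mul_le_mul_of_nonneg_left hq hd.le, Int.emod_nonneg (b - c) hd.ne']
  · simp

theorem Fin.sub_le_emod_sub_emod_of_unique_emod_eq_zero {n : ℕ} {d : ℤ} (hd : 0 < d) (c : ℤ)
    {s : Fin n} (hs : ∀ k : Fin n, ((k : ℤ) - c) % d = 0 → k = s) (j : Fin n) :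
    (j : ℤ) - s ≤ ((j : ℤ) - c) % d - ((s : ℤ) - c) % d := by
  by_contra! hlt
  obtain ⟨k, hsk, hkj, hk⟩ := Int.exists_emod_eq_zero_of_emod_sub_emod_lt hd hlt
  have hk_lt : k.toNat < n := by omega
  have := hs ⟨k.toNat, hk_lt⟩ (by rwa [Fin.val_mk, Int.toNat_of_nonneg (by omega)])
  rw [Fin.ext_iff, Fin.val_mk] at this
  omega

theorem stmt11_general (d n : ℕ) (hd : 1 ≤ d) (r : ℕ)
    (R : Fin n → Fin n → ℤ)
    (hR : ∀ i j : Fin n,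
      R i j = d * ⌈((r * (i.1 + 1) - (j.1 + 1) : ℤ) : ℚ) / (d : ℚ)⌉
        - (r * (i.1 + 1) - (j.1 + 1) : ℤ))
    (σ : Equiv.Perm (Fin n)) (hσ : ∀ i k : Fin n, R i k = 0 → σ i = k) :
    ∀ i j : Fin n, ((j.1 : ℤ) + 1) - (((σ i).1 : ℤ) + 1) ≤ R i j - R i (σ i) := by
  intro i j
  have hrow : ∀ k, R i k = ((k : ℤ) - (r * (i.1 + 1) - 1)) % d := fun k => by
    rw [hR, Int.natCast_mul_ceil_div_sub]
    ring_nf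
  rw [hrow, hrow]
  have := Fin.sub_le_emod_sub_emod_of_unique_emod_eq_zero (d := d) (by omega)
    (r * (i.1 + 1) - 1) (fun k hk => (hσ i k (by rwa [hrow])).symm) j
  omega

/-- Let `p > d` be prime, `r = p % d`, `1 ≤ n ≤ d`, and (1-indexed via `i.1+1`)
`r_{ij} = d·⌈(r·i − j)/d⌉ − (r·i − j)`, the least nonnegative residue of
`j − r·i ≡ j − i·p (mod d)`.  If a permutation `σ₀` of `{1,…,n}` satisfies
`σ₀(i) = k` whenever `r_{ik} = 0`, then `r_{ij} − r_{i,σ₀(i)} ≥ j − σ₀(i)`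
for all `i, j`. -/
theorem stmt11 (d p n : ℕ) (hd : 1 ≤ d) (hp : p.Prime) (hdp : d < p)
    (hn : 1 ≤ n) (hnd : n ≤ d) (r : ℕ) (hr : r = p % d)
    (R : Fin n → Fin n → ℤ)
    (hR : ∀ i j : Fin n,
      R i j = d * ⌈((r * (i.1 + 1) - (j.1 + 1) : ℤ) : ℚ) / (d : ℚ)⌉
        - (r * (i.1 + 1) - (j.1 + 1) : ℤ))
    (σ : Equiv.Perm (Fin n)) (hσ : ∀ i k : Fin n, R i k = 0 → σ i = k) :
    ∀ i j : Fin n, ((j.1 : ℤ) + 1) - (((σ i).1 : ℤ) + 1) ≤ R i j - R i (σ i) :=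
  stmt11_general d n hd r R hR σ hσ
end

section
/- Let E be a C_p-Banach space with orthonormal basis, u a completely continuous endomorphism of E with nuclear matrix M = (m_{ij}) with respect to the basis, and let h_1 ≤ h_2 ≤ ⋯ → ∞ satisfy ord_p m_{ij} ≥ h_i. Then the Newton polygon of the Fredholm determinant det(1 − uT) = Σ_k (−1)^k c_k T^k lies on or above the polygon with vertices (k, Σ_{i=1}^k h_i): that is, ord_p(c_k) ≥ h_1 + h_2 + ⋯ + h_k for every k ≥ 1. -/
open Polynomial Finset

lemma coeff_prod_linear {R ι : Type*} [CommRing R] [DecidableEq ι] (a b : ι → R)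
    (s : Finset ι) (k : ℕ) :
    (∏ i ∈ s, (C (a i) + C (b i) * X)).coeff k
      = ∑ T ∈ s.powersetCard k, (∏ i ∈ T, b i) * ∏ i ∈ s \ T, a i := by
  induction s using Finset.induction_on generalizing k with
  | empty =>
    cases k with
    | zero => simp
    | succ n =>
      rw [Finset.powersetCard_eq_empty.2 (by simp)]
      simp [Polynomial.coeff_one]
  | @insert j s hj ih =>
    rw [Finset.prod_insert hj, add_mul, Polynomial.coeff_add, Polynomial.coeff_C_mul,
      mul_assoc, Polynomial.coeff_C_mul]
    cases k with
    | zero =>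
      rw [Polynomial.coeff_X_mul_zero, mul_zero, add_zero, ih]
      simp only [Finset.powersetCard_zero, Finset.sum_singleton, Finset.prod_empty, one_mul,
        Finset.sdiff_empty, Finset.prod_insert hj, Finset.mul_sum]
    | succ n =>
      rw [Polynomial.coeff_X_mul, ih, ih, Finset.powersetCard_succ_insert hj,
        Finset.sum_union, Finset.sum_image]
      · have h1 : ∀ T ∈ s.powersetCard (n+1), (∏ i ∈ T, b i) * ∏ i ∈ insert j s \ T, a i
            = a j * ((∏ i ∈ T, b i) * ∏ i ∈ s \ T, a i) := by
          intro T hT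
          have hjT : j ∉ T := fun hmem =>
            hj ((Finset.mem_powersetCard.1 hT).1 hmem)
          rw [Finset.insert_sdiff_of_notMem _ hjT,
            Finset.prod_insert (by simp [hj])]
          ring
        have h2 : ∀ T ∈ s.powersetCard n, (∏ i ∈ insert j T, b i) * ∏ i ∈ insert j s \ insert j T, a i
            = b j * ((∏ i ∈ T, b i) * ∏ i ∈ s \ T, a i) := by
          intro T hT
          have hsub := (Finset.mem_powersetCard.1 hT).1
          have hjT : j ∉ T := fun hmem => hj (hsub hmem)
          have : insert j s \ insert j T = s \ T := by
            ext x
            simp only [Finset.mem_sdiff, Finset.mem_insert]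
            constructor
            · rintro ⟨hx1 | hx1, hx2⟩
              · exact absurd (Or.inl hx1) hx2
              · exact ⟨hx1, fun hx => hx2 (Or.inr hx)⟩
            · rintro ⟨hx1, hx2⟩
              exact ⟨Or.inr hx1, by rintro (rfl | hx) <;> [exact hj hx1; exact hx2 hx]⟩
          rw [this, Finset.prod_insert hjT]
          ring
        rw [Finset.sum_congr rfl h1, Finset.sum_congr rfl h2, ← Finset.mul_sum, ← Finset.mul_sum]
      · intro T hT U hU hTU
        have hjT : j ∉ T := fun hm => hj ((Finset.mem_powersetCard.1 hT).1 hm)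
        have hjU : j ∉ U := fun hm => hj ((Finset.mem_powersetCard.1 hU).1 hm)
        rw [← Finset.erase_insert hjT, ← Finset.erase_insert hjU, hTU]
      · rw [Finset.disjoint_left]
        intro T hT hT'
        obtain ⟨U, hU, rfl⟩ := Finset.mem_image.1 hT'
        exact hj ((Finset.mem_powersetCard.1 hT).1 (Finset.mem_insert_self _ _))

section
variable {K ι : Type*} [Field K] (v : K → WithTop ℝ) (hv0 : v 0 = ⊤)
  (hvmul : ∀ x y : K, v x + v y ≤ v (x * y))
  (hvadd : ∀ x y : K, min (v x) (v y) ≤ v (x + y))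

include hv0 hvadd in
lemma v_sum_ge (c : WithTop ℝ) (s : Finset ι) (f : ι → K)
    (hc : ∀ i ∈ s, c ≤ v (f i)) : c ≤ v (∑ i ∈ s, f i) := by
  induction s using Finset.cons_induction with
  | empty => simp [hv0]
  | cons j s hj ih =>
    rw [Finset.sum_cons]
    refine le_trans ?_ (hvadd _ _)
    exact le_min (hc j (Finset.mem_cons_self _ _))
      (ih fun i hi => hc i (Finset.mem_cons_of_mem hi))

include hvmul in
lemma v_prod_ge (s : Finset ι) (hs : s.Nonempty) (f : ι → K) (w : ι → ℝ)
    (hw : ∀ i ∈ s, (w i : WithTop ℝ) ≤ v (f i)) :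
    ((∑ i ∈ s, w i : ℝ) : WithTop ℝ) ≤ v (∏ i ∈ s, f i) := by
  induction hs using Finset.Nonempty.cons_induction with
  | singleton j => simpa using hw j (by simp)
  | cons j s hj hs ih =>
    rw [Finset.sum_cons, Finset.prod_cons]
    refine le_trans ?_ (hvmul _ _)
    rw [WithTop.coe_add]
    exact add_le_add (hw j (Finset.mem_cons_self _ _))
      (ih fun i hi => hw i (Finset.mem_cons_of_mem hi))

end

-- strict mono Fin k → ℕ bound
lemma strictMono_le_apply {k : ℕ} (f : Fin k → ℕ) (hf : StrictMono f) (i : Fin k) :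
    i.1 ≤ f i := by
  obtain ⟨n, hn⟩ := i
  induction n with
  | zero => exact Nat.zero_le _
  | succ m ih =>
    have h1 := ih (lt_trans (Nat.lt_succ_self m) hn)
    have h2 := hf (show (⟨m, lt_trans (Nat.lt_succ_self m) hn⟩ : Fin k) < ⟨m+1, hn⟩ by
      simp [Fin.lt_def])
    simp only [Fin.val_mk] at h1 h2 ⊢
    omega

-- sum over a k-subset of monotone h dominates sum over range k
lemma sum_subset_ge {N k : ℕ} (T : Finset (Fin N)) (hT : T.card = k)
    (h : ℕ → ℝ) (hmono : Monotone h) :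
    ∑ i ∈ Finset.range k, h i ≤ ∑ j ∈ T, h j.1 := by
  have e := T.orderIsoOfFin hT
  have hsum : ∑ j ∈ T, h j.1 = ∑ i : Fin k, h (e i).1.1 := by
    rw [← Finset.sum_attach T (fun j => h j.1)]
    exact (Fintype.sum_equiv e.toEquiv _ _ (fun i => rfl)).symm
  rw [hsum, Finset.sum_range fun i => h i]
  apply Finset.sum_le_sum
  intro i _
  apply hmono
  refine strictMono_le_apply (fun i => ((e i : Fin N) : ℕ)) ?_ i
  intro x y hxy
  exact_mod_cast (OrderIso.lt_iff_lt e).2 hxy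

/-- Hodge bound for the Fredholm determinant (finite version): if every entry of
row `i` of `M` has `ord ≥ h_i` with `h` non-decreasing (and tending to infinity),
then writing `det(1 − M·T) = Σ_k (±)c_k T^k`, every coefficient satisfies
`ord(c_k) ≥ h_1 + h_2 + ⋯ + h_k` (0-indexed: `Σ_{i<k} h i`), i.e. the Newton
polygon of the Fredholm determinant lies on or above the polygon with vertices
`(k, Σ_{i=1}^k h_i)`. -/
theorem stmt17 {K : Type*} [Field K] (v : K → WithTop ℝ) (hv0 : v 0 = ⊤)
    (hvmul : ∀ x y : K, v x + v y ≤ v (x * y))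
    (hvadd : ∀ x y : K, min (v x) (v y) ≤ v (x + y))
    (hvneg : ∀ x : K, v (-x) = v x)
    (N : ℕ) (M : Matrix (Fin N) (Fin N) K)
    (h : ℕ → ℝ) (hmono : Monotone h)
    (hinf : Filter.Tendsto h Filter.atTop Filter.atTop)
    (hbound : ∀ (i j : Fin N), ((h i.1 : ℝ) : WithTop ℝ) ≤ v (M i j)) :
    ∀ k : ℕ, 1 ≤ k →
      (((∑ i ∈ Finset.range k, h i : ℝ)) : WithTop ℝ)
        ≤ v ((Matrix.det (1 - (Polynomial.X : Polynomial K) • M.map Polynomial.C)).coeff k) := by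
  intro k hk
  set c : WithTop ℝ := ((∑ i ∈ Finset.range k, h i : ℝ) : WithTop ℝ) with hc
  rw [Matrix.det_apply, Polynomial.finset_sum_coeff]
  apply v_sum_ge v hv0 hvadd
  intro σ _
  -- entries are linear polynomials
  have hentry : ∀ i : Fin N, (1 - (Polynomial.X : Polynomial K) • M.map Polynomial.C) (σ i) i
      = C (if σ i = i then (1:K) else 0) + C (-(M (σ i) i)) * X := by
    intro i
    rw [Matrix.sub_apply, Matrix.one_apply, Matrix.smul_apply, Matrix.map_apply,
      smul_eq_mul, map_neg]
    split_ifs <;> simp only [map_one, map_zero] <;> ring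
  -- remove the sign
  have key : c ≤ v ((∏ i, (1 - (Polynomial.X : Polynomial K) • M.map Polynomial.C) (σ i) i).coeff k) := by
    simp only [hentry]
    rw [coeff_prod_linear]
    apply v_sum_ge v hv0 hvadd
    intro T hT
    have hTcard : T.card = k := (Finset.mem_powersetCard.1 hT).2
    by_cases hfix : ∀ i ∈ Finset.univ \ T, σ i = i
    · have h1 : ∏ i ∈ Finset.univ \ T, (if σ i = i then (1:K) else 0) = 1 :=
        Finset.prod_eq_one fun i hi => if_pos (hfix i hi)
      rw [h1, mul_one]
      have hTne : T.Nonempty := Finset.card_pos.1 (by omega)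
      have hvp := v_prod_ge v hvmul T hTne (fun i => -(M (σ i) i)) (fun i => h (σ i).1)
        (fun i _ => by rw [hvneg]; exact hbound (σ i) i)
      refine le_trans ?_ hvp
      rw [hc]
      apply WithTop.coe_le_coe.2
      have himg : (T.image σ).card = k := by
        rw [Finset.card_image_of_injective _ σ.injective, hTcard]
      calc ∑ i ∈ Finset.range k, h i ≤ ∑ j ∈ T.image σ, h j.1 :=
            sum_subset_ge _ himg h hmono
        _ = ∑ i ∈ T, h (σ i).1 :=
            Finset.sum_image fun x _ y _ hxy => σ.injective hxy
    · push_neg at hfix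
      obtain ⟨i0, hi0, hi0'⟩ := hfix
      have h0 : ∏ i ∈ Finset.univ \ T, (if σ i = i then (1:K) else 0) = 0 :=
        Finset.prod_eq_zero hi0 (if_neg hi0')
      rw [h0, mul_zero, hv0]
      exact le_top
  rcases Int.units_eq_one_or (Equiv.Perm.sign σ) with hs | hs <;> rw [hs] <;>
    simp only [one_smul, Units.neg_smul, Polynomial.coeff_neg, hvneg]
  · exact key
  · exact key
end
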